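/- The weighted greedy algorithm achieves approximation ratio (1/k)·Σ_{j=0}^{k−1} λ^j = (1 − λ^k)/(k(1 − λ)): if Z is its output after k steps, then f(Z) ≥ (1/k)(Σ_{j=0}^{k−1} λ^j) · max_{|Z̄|=k} f(Z̄). -/

import Mathlib

/-- Sort the values of a multiset of reals in nonincreasing order. -/
noncomputable def descSort (s : Multiset ℝ) : List ℝ :=
  (s.sort (· ≤ ·)).reverse

/-- `∑_j λ^j * l_j` for a list `l` (0-based exponents). -/
noncomputable def smoothSum (lam : ℝ) (l : List ℝ) : ℝ :=
  ∑ j ∈ Finset.range l.length, lam ^ j * l.getD j 0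

lemma smoothSum_nil (lam : ℝ) : smoothSum lam [] = 0 := by simp [smoothSum]

lemma smoothSum_cons (lam a : ℝ) (t : List ℝ) :
    smoothSum lam (a :: t) = a + lam * smoothSum lam t := by
  unfold smoothSum
  rw [List.length_cons, Finset.sum_range_succ']
  simp only [List.getD_cons_succ, List.getD_cons_zero, pow_zero, one_mul, pow_succ]
  rw [Finset.mul_sum]
  rw [add_comm]
  congr 1
  apply Finset.sum_congr rfl
  intro j _
  ring

lemma sum_getD_eq (l : List ℝ) : ∑ j ∈ Finset.range l.length, l.getD j 0 = l.sum := by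
  induction l with
  | nil => simp
  | cons a t ih =>
    rw [List.length_cons, Finset.sum_range_succ']
    simp only [List.getD_cons_succ, List.getD_cons_zero, List.sum_cons]
    rw [ih, add_comm]

lemma descSort_sorted (s : Multiset ℝ) : (descSort s).Pairwise (· ≥ ·) := by
  have := Multiset.pairwise_sort (s := s) (r := (· ≤ ·))
  simpa [descSort, List.pairwise_reverse] using this

lemma descSort_coe (s : Multiset ℝ) : ((descSort s : List ℝ) : Multiset ℝ) = s := by
  rw [descSort]
  have : ((((s.sort (· ≤ ·)).reverse : List ℝ)) : Multiset ℝ) = ↑(s.sort (· ≤ ·)) :=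
    Multiset.coe_eq_coe.mpr (List.reverse_perm _)
  rw [this, Multiset.sort_eq]

lemma descSort_eq_of_sorted (l : List ℝ) (h : l.Pairwise (· ≥ ·)) : descSort ↑l = l := by
  apply List.Perm.eq_of_pairwise' (descSort_sorted _) h
    (Multiset.coe_eq_coe.mp (descSort_coe ↑l))

lemma smoothSum_le_sum (lam : ℝ) (h0 : 0 ≤ lam) (h1 : lam ≤ 1) (l : List ℝ)
    (hl : ∀ x ∈ l, 0 ≤ x) : smoothSum lam l ≤ l.sum := by
  rw [← sum_getD_eq]
  apply Finset.sum_le_sum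
  intro j hj
  have hjl : j < l.length := Finset.mem_range.mp hj
  have hmem : l.getD j 0 ∈ l := by
    rw [List.getD_eq_getElem l 0 hjl]
    exact List.getElem_mem _
  have : 0 ≤ l.getD j 0 := hl _ hmem
  nlinarith [pow_le_one₀ h0 h1 (n := j), pow_nonneg h0 j]

lemma smoothSum_nonneg (lam : ℝ) (h0 : 0 ≤ lam) (l : List ℝ) (hl : ∀ x ∈ l, 0 ≤ x) :
    0 ≤ smoothSum lam l := by
  apply Finset.sum_nonneg
  intro j hj
  have hjl : j < l.length := Finset.mem_range.mp hj
  have hmem : l.getD j 0 ∈ l := by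
    rw [List.getD_eq_getElem l 0 hjl]
    exact List.getElem_mem _
  exact mul_nonneg (pow_nonneg h0 j) (hl _ hmem)

lemma bound_lemma (lam b : ℝ) (h0 : 0 ≤ lam) (h1 : lam ≤ 1) (hb : 0 ≤ b) :
    ∀ l : List ℝ, l.Pairwise (· ≥ ·) → (∀ x ∈ l, 0 ≤ x) → (∀ x ∈ l, x ≤ b) →
    smoothSum lam l ≤ (∑ j ∈ Finset.range (l.countP (fun x => decide (0 < x))), lam ^ j) * b := by
  intro l
  induction l with
  | nil => intro _ _ _; simp [smoothSum_nil]
  | cons a t ih =>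
    intro hs hnn hub
    have hts : t.Pairwise (· ≥ ·) := hs.of_cons
    have htnn : ∀ x ∈ t, 0 ≤ x := fun x hx => hnn x (List.mem_cons_of_mem _ hx)
    have htub : ∀ x ∈ t, x ≤ b := fun x hx => hub x (List.mem_cons_of_mem _ hx)
    have IH := ih hts htnn htub
    have hRHSnn : 0 ≤ (∑ j ∈ Finset.range (t.countP (fun x => decide (0 < x))), lam ^ j) * b :=
      mul_nonneg (Finset.sum_nonneg fun j _ => pow_nonneg h0 j) hb
    rw [smoothSum_cons]
    by_cases ha : 0 < a
    · have hc : (a :: t).countP (fun x => decide (0 < x)) = t.countP (fun x => decide (0 < x)) + 1 := by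
        rw [List.countP_cons]
        simp [ha]
      rw [hc, Finset.sum_range_succ']
      simp only [pow_zero]
      rw [add_mul, one_mul]
      have : (∑ j ∈ Finset.range (t.countP (fun x => decide (0 < x))), lam ^ (j + 1)) =
          lam * ∑ j ∈ Finset.range (t.countP (fun x => decide (0 < x))), lam ^ j := by
        rw [Finset.mul_sum]
        exact Finset.sum_congr rfl fun j _ => by ring
      rw [this]
      have hab : a ≤ b := hub a (List.mem_cons_self)
      nlinarith [mul_le_mul_of_nonneg_left IH h0]
    · have ha0 : a = 0 := le_antisymm (not_lt.mp ha) (hnn a (List.mem_cons_self))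
      have hc : (a :: t).countP (fun x => decide (0 < x)) = t.countP (fun x => decide (0 < x)) := by
        rw [List.countP_cons]
        simp [ha]
      rw [hc, ha0, zero_add]
      calc lam * smoothSum lam t ≤ 1 * smoothSum lam t := by
            apply mul_le_mul_of_nonneg_right h1 (smoothSum_nonneg lam h0 t htnn)
        _ = smoothSum lam t := one_mul _
        _ ≤ _ := IH

lemma key_lemma (lam b : ℝ) (h0 : 0 ≤ lam) (h1 : lam ≤ 1) (hb : 0 ≤ b) :
    ∀ l : List ℝ, l.Pairwise (· ≥ ·) → (∀ x ∈ l, 0 ≤ x) →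
    smoothSum lam l + lam ^ (l.countP (fun x => decide (0 < x))) * b ≤
      smoothSum lam (List.orderedInsert (· ≥ ·) b l) := by
  intro l
  induction l with
  | nil =>
    intro _ _
    simp [List.orderedInsert, smoothSum_cons, smoothSum_nil]
  | cons a t ih =>
    intro hs hnn
    have hts : t.Pairwise (· ≥ ·) := hs.of_cons
    have htnn : ∀ x ∈ t, 0 ≤ x := fun x hx => hnn x (List.mem_cons_of_mem _ hx)
    rw [List.orderedInsert]
    by_cases hba : b ≥ a
    · rw [if_pos hba]
      rw [smoothSum_cons lam b (a :: t)]
      set S := smoothSum lam (a :: t) with hS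
      set c := (a :: t).countP (fun x => decide (0 < x)) with hcdef
      have hub : ∀ x ∈ a :: t, x ≤ b := by
        intro x hx
        rcases List.mem_cons.mp hx with h | h
        · exact h ▸ hba
        · exact le_trans (List.rel_of_pairwise_cons hs h) hba
      have hSb : S ≤ (∑ j ∈ Finset.range c, lam ^ j) * b :=
        bound_lemma lam b h0 h1 hb (a :: t) hs hnn hub
      have hgeom : (1 - lam) * (∑ j ∈ Finset.range c, lam ^ j) = 1 - lam ^ c := by
        have := geom_sum_mul lam c
        linarith [this]
      nlinarith [pow_nonneg h0 c]
    · rw [if_neg hba]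
      push_neg at hba
      have hab : 0 < a := lt_of_le_of_lt hb hba
      have hc : (a :: t).countP (fun x => decide (0 < x)) = t.countP (fun x => decide (0 < x)) + 1 := by
        rw [List.countP_cons]; simp [hab]
      rw [hc, smoothSum_cons, smoothSum_cons]
      have IH := ih hts htnn
      have := mul_le_mul_of_nonneg_left IH h0
      rw [pow_succ]
      nlinarith [this]

/-- The smoothed weighted coverage function:
`f(Z) = ∑_{n<N} ∑_j λ^{j} v^{(n)}(z_{g^{(n)}(j)})` where for each aspect `n` the
values `v^{(n)}(z)`, `z ∈ Z`, are sorted nonincreasingly. -/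
noncomputable def smoothCov {Ω : Type*} (lam : ℝ) (N : ℕ) (v : Ω → ℕ → ℝ)
    (Z : Finset Ω) : ℝ :=
  ∑ n ∈ Finset.range N, smoothSum lam (descSort (Z.val.map (fun z => v z n)))

open scoped Classical in
/-- The greedy weighted dot product `w_Z^T v(z)`, where `w_Z^{(n)} = λ^{c(n)}`
and `c(n)` is the number of elements of `Z` with positive `n`-th weight. -/
noncomputable def wdot {Ω : Type*} (lam : ℝ) (N : ℕ) (v : Ω → ℕ → ℝ)
    (Z : Finset Ω) (z : Ω) : ℝ :=
  ∑ n ∈ Finset.range N, lam ^ (Z.filter (fun y => 0 < v y n)).card * v z n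

lemma key_multiset (lam b : ℝ) (h0 : 0 ≤ lam) (h1 : lam ≤ 1) (hb : 0 ≤ b)
    (s : Multiset ℝ) (hs : ∀ x ∈ s, 0 ≤ x) :
    smoothSum lam (descSort s) + lam ^ (Multiset.countP (fun x => 0 < x) s) * b ≤
      smoothSum lam (descSort (b ::ₘ s)) := by
  classical
  set l := descSort s with hl
  have hls : l.Pairwise (· ≥ ·) := descSort_sorted s
  have hcoe : (↑l : Multiset ℝ) = s := descSort_coe s
  have hlnn : ∀ x ∈ l, 0 ≤ x := by
    intro x hx
    apply hs
    rw [← hcoe]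
    exact hx
  have hins : descSort (b ::ₘ s) = List.orderedInsert (· ≥ ·) b l := by
    have h1' : (↑(List.orderedInsert (· ≥ ·) b l) : Multiset ℝ) = b ::ₘ s := by
      rw [Multiset.coe_eq_coe.mpr (List.perm_orderedInsert _ b l)]
      rw [← hcoe]
      rfl
    rw [← h1', descSort_eq_of_sorted _ (hls.orderedInsert b l)]
  have hcount : Multiset.countP (fun x => 0 < x) s = l.countP (fun x => decide (0 < x)) := by
    rw [← hcoe]
    rfl
  rw [hins, hcount]
  exact key_lemma lam b h0 h1 hb l hls hlnn

lemma smoothCov_gain {Ω : Type*} [DecidableEq Ω] (lam : ℝ) (h0 : 0 ≤ lam) (h1 : lam ≤ 1)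
    (N : ℕ) (v : Ω → ℕ → ℝ) (hv : ∀ z n, 0 ≤ v z n) (Z : Finset Ω) (z : Ω) (hz : z ∉ Z) :
    smoothCov lam N v Z + wdot lam N v Z z ≤ smoothCov lam N v (insert z Z) := by
  classical
  rw [smoothCov, smoothCov, wdot, ← Finset.sum_add_distrib]
  apply Finset.sum_le_sum
  intro n _
  have hval : (insert z Z).val = z ::ₘ Z.val := Finset.insert_val_of_notMem hz
  rw [hval, Multiset.map_cons]
  have hcard : (Z.filter (fun y => 0 < v y n)).card =
      Multiset.countP (fun x => 0 < x) (Z.val.map (fun y => v y n)) := by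
    rw [Multiset.countP_map, Finset.card_def, Finset.filter_val]
  rw [hcard]
  exact key_multiset lam (v z n) h0 h1 (hv z n) _ (by
    intro x hx
    obtain ⟨y, _, rfl⟩ := Multiset.mem_map.mp hx
    exact hv y n)

lemma ord_lemma {Ω : Type*} [DecidableEq Ω] (W : Finset Ω) (w : Ω → ℝ) (Z : ℕ → Finset Ω)
    (m : ℕ → ℝ) (hZ : ∀ i, (Z i).card ≤ i)
    (hm : ∀ i < W.card, ∀ z ∈ W, z ∉ Z i → w z ≤ m i) :
    ∑ z ∈ W, w z ≤ ∑ i ∈ Finset.range W.card, m i := by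
  suffices h : ∀ n, ∀ Y ⊆ W, Y.card = n → n ≤ W.card →
      ∑ z ∈ Y, w z ≤ ∑ i ∈ Finset.range n, m i by
    exact h W.card W (le_refl W) rfl (le_refl _)
  intro n
  induction n with
  | zero =>
    intro Y _ hY _
    rw [Finset.card_eq_zero.mp hY]
    simp
  | succ n ih =>
    intro Y hYW hY hn
    obtain ⟨y, hyY, hyZ⟩ : ∃ y ∈ Y, y ∉ Z n := by
      by_contra h
      push_neg at h
      have : Y ⊆ Z n := h
      have h5 := Finset.card_le_card this
      have h6 := hZ n
      omega
    have h1 : ∑ z ∈ Y, w z = w y + ∑ z ∈ Y.erase y, w z :=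
      (Finset.add_sum_erase Y w hyY).symm
    have h2 : (Y.erase y).card = n := by
      rw [Finset.card_erase_of_mem hyY, hY]
      omega
    have h3 := ih (Y.erase y) (le_trans (Finset.erase_subset y Y) hYW) h2 (le_of_lt hn)
    have h4 : w y ≤ m n := hm n hn y (hYW hyY) hyZ
    rw [h1, Finset.sum_range_succ]
    linarith

lemma smoothCov_empty {Ω : Type*} (lam : ℝ) (N : ℕ) (v : Ω → ℕ → ℝ) :
    smoothCov lam N v (∅ : Finset Ω) = 0 := by
  simp [smoothCov, descSort, smoothSum]

lemma telescope {Ω : Type*} [DecidableEq Ω] (lam : ℝ) (h0 : 0 ≤ lam) (h1 : lam ≤ 1)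
    (N : ℕ) (v : Ω → ℕ → ℝ) (hv : ∀ z n, 0 ≤ v z n) (k : ℕ) (c : ℕ → Ω)
    (hnew : ∀ i < k, c i ∉ (Finset.range i).image c) :
    ∑ i ∈ Finset.range k, wdot lam N v ((Finset.range i).image c) (c i) ≤
      smoothCov lam N v ((Finset.range k).image c) := by
  suffices h : ∀ j ≤ k, ∑ i ∈ Finset.range j, wdot lam N v ((Finset.range i).image c) (c i) ≤
      smoothCov lam N v ((Finset.range j).image c) from h k (le_refl k)
  intro j
  induction j with
  | zero => intro _; simp [smoothCov_empty]
  | succ j ih =>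
    intro hj
    have hins : (Finset.range (j + 1)).image c = insert (c j) ((Finset.range j).image c) := by
      rw [Finset.range_add_one, Finset.image_insert]
    rw [Finset.sum_range_succ, hins]
    calc ∑ i ∈ Finset.range j, wdot lam N v ((Finset.range i).image c) (c i) +
          wdot lam N v ((Finset.range j).image c) (c j)
        ≤ smoothCov lam N v ((Finset.range j).image c) +
          wdot lam N v ((Finset.range j).image c) (c j) := by
          linarith [ih (le_of_lt hj)]
      _ ≤ _ := smoothCov_gain lam h0 h1 N v hv _ _ (hnew j hj)

lemma descSort_sum (s : Multiset ℝ) : (descSort s).sum = s.sum := by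
  conv_rhs => rw [← descSort_coe s]
  simp

lemma smoothCov_le_sum {Ω : Type*} (lam : ℝ) (h0 : 0 ≤ lam) (h1 : lam ≤ 1) (N : ℕ)
    (v : Ω → ℕ → ℝ) (hv : ∀ z n, 0 ≤ v z n) (Z : Finset Ω) :
    smoothCov lam N v Z ≤ ∑ z ∈ Z, ∑ n ∈ Finset.range N, v z n := by
  rw [Finset.sum_comm, smoothCov]
  apply Finset.sum_le_sum
  intro n _
  calc smoothSum lam (descSort (Z.val.map fun z => v z n))
      ≤ (descSort (Z.val.map fun z => v z n)).sum := by
        apply smoothSum_le_sum lam h0 h1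
        intro x hx
        have : x ∈ Z.val.map fun z => v z n := by
          rw [← descSort_coe (Z.val.map fun z => v z n)]
          exact hx
        obtain ⟨y, _, rfl⟩ := Multiset.mem_map.mp this
        exact hv y n
    _ = (Z.val.map fun z => v z n).sum := descSort_sum _
    _ = ∑ z ∈ Z, v z n := rfl

/-- the weighted greedy algorithm achieves the approximation
ratio `(1/k) ∑_{j<k} λ^j` with respect to the optimal size-`k` set. -/
theorem weighted_greedy_approx_ratio {Ω : Type*} [DecidableEq Ω] (lam : ℝ)
    (hlam0 : 0 ≤ lam) (hlam1 : lam ≤ 1) (N k : ℕ) (hk : 0 < k) (v : Ω → ℕ → ℝ)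
    (hv : ∀ z n, 0 ≤ v z n) (T : Finset Ω) (c : ℕ → Ω)
    (hmem : ∀ i < k, c i ∈ T)
    (hnew : ∀ i < k, c i ∉ (Finset.range i).image c)
    (hgreedy : ∀ i < k, ∀ z ∈ T, z ∉ (Finset.range i).image c →
      wdot lam N v ((Finset.range i).image c) z ≤
        wdot lam N v ((Finset.range i).image c) (c i))
    (Zstar : Finset Ω) (hZT : Zstar ⊆ T) (hcard : Zstar.card = k)
    (hopt : ∀ Z ⊆ T, Z.card = k → smoothCov lam N v Z ≤ smoothCov lam N v Zstar) :
    (1 / (k : ℝ)) * (∑ j ∈ Finset.range k, lam ^ j) * smoothCov lam N v Zstar ≤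
      smoothCov lam N v ((Finset.range k).image c) := by
  classical
  set w : Ω → ℝ := fun z => ∑ n ∈ Finset.range N, v z n with hw
  have hZcard : ∀ i, ((Finset.range i).image c).card ≤ i := fun i =>
    le_trans (Finset.card_image_le) (le_of_eq (Finset.card_range i))
  have hne : ∀ i < k, (Zstar \ (Finset.range i).image c).Nonempty := by
    intro i hi
    rw [Finset.nonempty_iff_ne_empty]
    intro hemp
    have hsub : Zstar ⊆ (Finset.range i).image c := by
      rwa [← Finset.sdiff_eq_empty_iff_subset]
    have := Finset.card_le_card hsub
    have := hZcard i
    omega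
  set m : ℕ → ℝ := fun i =>
    if h : (Zstar \ (Finset.range i).image c).Nonempty
    then (Zstar \ (Finset.range i).image c).sup' h w else 0 with hm
  have hmub : ∀ i < k, ∀ z ∈ Zstar, z ∉ (Finset.range i).image c → w z ≤ m i := by
    intro i hi z hz hnz
    rw [hm]
    simp only [dif_pos (hne i hi)]
    exact Finset.le_sup' w (Finset.mem_sdiff.mpr ⟨hz, hnz⟩)
  -- lower bound for greedy gains
  have hgm : ∀ i < k, lam ^ i * m i ≤ wdot lam N v ((Finset.range i).image c) (c i) := by
    intro i hi
    obtain ⟨z, hzmem, hzeq⟩ := Finset.exists_mem_eq_sup' (hne i hi) w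
    have hmi : m i = w z := by rw [hm]; simp only [dif_pos (hne i hi)]; exact hzeq
    obtain ⟨hzZ, hznot⟩ := Finset.mem_sdiff.mp hzmem
    have step1 : lam ^ i * w z ≤ wdot lam N v ((Finset.range i).image c) z := by
      rw [wdot, hw, Finset.mul_sum]
      apply Finset.sum_le_sum
      intro n _
      apply mul_le_mul_of_nonneg_right _ (hv z n)
      apply pow_le_pow_of_le_one hlam0 hlam1
      exact le_trans (Finset.card_filter_le _ _) (hZcard i)
    rw [hmi]
    exact le_trans step1 (hgreedy i hi z (hZT hzZ) hznot)
  -- Chebyshev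
  have hmono : MonovaryOn (fun i => lam ^ i) m (Finset.range k) := by
    intro i hi j hj hlt
    have hik : i < k := Finset.mem_range.mp hi
    have hjk : j < k := Finset.mem_range.mp hj
    rcases le_or_gt i j with hij | hji
    · exfalso
      obtain ⟨z, hzmem, hzeq⟩ := Finset.exists_mem_eq_sup' (hne j hjk) w
      have hmj : m j = w z := by rw [hm]; simp only [dif_pos (hne j hjk)]; exact hzeq
      obtain ⟨hzZ, hznot⟩ := Finset.mem_sdiff.mp hzmem
      have hznoti : z ∉ (Finset.range i).image c := by
        intro hmemi
        exact hznot (Finset.image_subset_image (Finset.range_subset_range.mpr hij) hmemi)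
      have : w z ≤ m i := hmub i hik z hzZ hznoti
      rw [← hmj] at this
      exact absurd hlt (not_lt.mpr this)
    · exact pow_le_pow_of_le_one hlam0 hlam1 (le_of_lt hji)
  have cheb := hmono.sum_mul_sum_le_card_mul_sum
  rw [Finset.card_range] at cheb
  -- charging
  have hcharge : ∑ z ∈ Zstar, w z ≤ ∑ i ∈ Finset.range k, m i := by
    have := ord_lemma Zstar w (fun i => (Finset.range i).image c) m hZcard
      (by rw [hcard]; exact hmub)
    rwa [hcard] at this
  have hupper : smoothCov lam N v Zstar ≤ ∑ z ∈ Zstar, w z :=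
    smoothCov_le_sum lam hlam0 hlam1 N v hv Zstar
  have htel := telescope lam hlam0 hlam1 N v hv k c hnew
  have hsum : ∑ i ∈ Finset.range k, lam ^ i * m i ≤
      ∑ i ∈ Finset.range k, wdot lam N v ((Finset.range i).image c) (c i) :=
    Finset.sum_le_sum fun i hi => hgm i (Finset.mem_range.mp hi)
  have hk' : (0 : ℝ) < k := Nat.cast_pos.mpr hk
  have hG : 0 ≤ ∑ j ∈ Finset.range k, lam ^ j :=
    Finset.sum_nonneg fun j _ => pow_nonneg hlam0 j
  calc (1 / (k : ℝ)) * (∑ j ∈ Finset.range k, lam ^ j) * smoothCov lam N v Zstar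
      ≤ (1 / (k : ℝ)) * (∑ j ∈ Finset.range k, lam ^ j) * ∑ i ∈ Finset.range k, m i := by
        apply mul_le_mul_of_nonneg_left (le_trans hupper hcharge) (by positivity)
    _ = (1 / (k : ℝ)) * ((∑ j ∈ Finset.range k, lam ^ j) * ∑ i ∈ Finset.range k, m i) := by
        ring
    _ ≤ (1 / (k : ℝ)) * ((k : ℝ) * ∑ i ∈ Finset.range k, lam ^ i * m i) := by
        apply mul_le_mul_of_nonneg_left cheb (by positivity)
    _ = ∑ i ∈ Finset.range k, lam ^ i * m i := by field_simp
    _ ≤ ∑ i ∈ Finset.range k, wdot lam N v ((Finset.range i).image c) (c i) := hsum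
    _ ≤ smoothCov lam N v ((Finset.range k).image c) := htel
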